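/- arXiv:math/0108118 — 3 statements merged into one kernel-verified Lean document; each statement's English description precedes it below -/
import Mathlib

section
/- For every real x ≥ 1, one has √(2π) · x^(x - 1/2) · e^{-x} ≤ Γ(x) ≤ √(2π) · x^(x - 1/2) · e^{-x} · e^{1/12}. -/
/-!
Write `Γ x = √(2π) x^(x - 1/2) e^(-x) e^(μ x)`, where `μ` is Binet's function `binetFun`.
The functional equation of `Γ` gives `μ x - μ (x + 1) = (x + 1/2) log (1 + 1/x) - 1`, and expanding
the logarithm in powers of `1 / (2x + 1)` shows this lies between `0` and
`1 / (12x) - 1 / (12(x + 1))`. Hence `μ (x + n)` decreases in `n` while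
`μ (x + n) - 1 / (12(x + n))` increases, and both tend to `0`: along the integers this is
Stirling's formula, and log-convexity of `Γ` transfers it to the shifted points `x + n`.
So `0 ≤ μ x ≤ 1 / (12x)`.
-/

open Real Filter Topology

noncomputable def binetFun (x : ℝ) : ℝ :=
  log (Gamma x) - (x - 1 / 2) * log x + x - log √(2 * π)

lemma binetFun_sub_binetFun_add_one {x : ℝ} (hx : 0 < x) :
    binetFun x - binetFun (x + 1) = (x + 1 / 2) * log (1 + x⁻¹) - 1 := by
  have h : 1 + x⁻¹ = (x + 1) / x := by field_simp
  rw [binetFun, binetFun, Gamma_add_one hx.ne', log_mul hx.ne' (Gamma_pos_of_pos hx).ne', h,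
    log_div (by positivity) hx.ne']
  ring

lemma hasSum_binetFun_sub_binetFun_add_one {x : ℝ} (hx : 0 < x) :
    HasSum (fun k : ℕ => 1 / (2 * ((k + 1 : ℕ) : ℝ) + 1) * ((1 / (2 * x + 1)) ^ 2) ^ (k + 1))
      (binetFun x - binetFun (x + 1)) := by
  let f (k : ℕ) : ℝ := 1 / (2 * k + 1) * ((1 / (2 * x + 1)) ^ 2) ^ k
  change HasSum (fun k => f (k + 1)) _
  rw [hasSum_nat_add_iff, Finset.sum_range_one, binetFun_sub_binetFun_add_one hx]
  have hu : (x + 1 / 2) * 2 * (1 / (2 * x + 1)) = 1 := by field_simp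
  convert! (hasSum_log_one_add_inv hx).mul_left (x + 1 / 2) using 1
  · funext k
    simp only [f]
    rw [← pow_mul, pow_succ]
    linear_combination (-(1 / (2 * (k : ℝ) + 1)) * (1 / (2 * x + 1)) ^ (2 * k)) * hu
  · simp [f]

lemma binetFun_add_one_le {x : ℝ} (hx : 0 < x) : binetFun (x + 1) ≤ binetFun x :=
  sub_nonneg.1 <| (hasSum_binetFun_sub_binetFun_add_one hx).nonneg fun _ => by positivity

lemma binetFun_sub_binetFun_add_one_le {x : ℝ} (hx : 0 < x) :
    binetFun x - binetFun (x + 1) ≤ 1 / (12 * x) - 1 / (12 * (x + 1)) := by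
  set r := (1 / (2 * x + 1)) ^ 2 with hr
  have hr₁ : r < 1 := by
    rw [hr, div_pow, one_pow, div_lt_one (by positivity)]
    nlinarith
  have hgeom := ((hasSum_geometric_of_lt_one (by positivity) hr₁).mul_right r).div_const 3
  simp only [← pow_succ] at hgeom
  have hsum : (1 - r)⁻¹ * r / 3 = 1 / (12 * x) - 1 / (12 * (x + 1)) := by
    have h : 1 - r = 4 * x * (x + 1) / (2 * x + 1) ^ 2 := by rw [hr]; field_simp; ring
    rw [h, hr]
    field_simp
    ring
  rw [hsum] at hgeom
  refine hasSum_le (fun k => ?_) (hasSum_binetFun_sub_binetFun_add_one hx) hgeom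
  rw [one_div_mul_eq_div]
  gcongr
  push_cast
  linarith [k.cast_nonneg (α := ℝ)]

lemma binetFun_natCast {n : ℕ} (hn : n ≠ 0) :
    binetFun n = log (Stirling.stirlingSeq n) - log √π := by
  obtain ⟨m, rfl⟩ := Nat.exists_eq_succ_of_ne_zero hn
  rw [binetFun, Stirling.log_stirlingSeq_formula, Nat.cast_succ, Gamma_nat_eq_factorial,
    Nat.factorial_succ, Nat.cast_mul, log_mul (by positivity) (by positivity),
    log_mul (by positivity) (by positivity), log_div (by positivity) (by positivity), log_exp,
    log_sqrt (by positivity), log_sqrt (by positivity), log_mul (by positivity) (by positivity)]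
  push_cast
  ring_nf

lemma tendsto_binetFun_natCast : Tendsto (fun n : ℕ => binetFun n) atTop (𝓝 0) := by
  have h := ((continuousAt_log (by positivity)).tendsto.comp
    Stirling.tendsto_stirlingSeq_sqrt_pi).sub_const (log √π)
  rw [sub_self] at h
  refine h.congr' ?_
  filter_upwards [eventually_ne_atTop 0] with n hn
  exact (binetFun_natCast hn).symm

lemma tendsto_log_Gamma_natCast_add_sub {t : ℝ} (ht₀ : 0 < t) (ht₁ : t ≤ 1) :
    Tendsto (fun n : ℕ => log (Gamma (n + t)) - log (Gamma n) - t * log n) atTop (𝓝 0) := by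
  have hfeq : ∀ {y : ℝ}, 0 < y → (log ∘ Gamma) (y + 1) = (log ∘ Gamma) y + log y :=
    fun {y} hy => by
      rw [Function.comp_apply, Gamma_add_one hy.ne', log_mul hy.ne' (Gamma_pos_of_pos hy).ne',
        add_comm, Function.comp_apply]
  have hlower : Tendsto (fun n : ℕ => t * (log (n - 1) - log n)) atTop (𝓝 0) := by
    rw [← tendsto_add_atTop_iff_nat 1]
    have h := (tendsto_log_nat_add_one_sub_log.const_mul (-t)).congr fun n =>
      show _ = t * (log ((n + 1 : ℕ) - 1 : ℝ) - log (n + 1 : ℕ)) by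
        push_cast
        rw [add_sub_cancel_right]
        ring
    rwa [mul_zero] at h
  refine tendsto_of_tendsto_of_tendsto_of_le_of_le' hlower tendsto_const_nhds ?_ ?_
  · filter_upwards [eventually_ge_atTop 2] with n hn
    have := BohrMollerup.f_add_nat_ge convexOn_log_Gamma hfeq hn ht₀
    simp only [Function.comp_apply] at this
    linarith
  · filter_upwards [eventually_ne_atTop 0] with n hn
    have := BohrMollerup.f_add_nat_le convexOn_log_Gamma hfeq hn ht₀ ht₁
    simp only [Function.comp_apply] at this
    linarith

lemma tendsto_mul_log_natCast_add_sub_log (t : ℝ) :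
    Tendsto (fun n : ℕ => (n + t - 1 / 2) * (log (n + t) - log n)) atTop (𝓝 t) := by
  have hlog : Tendsto (fun n : ℕ => log (1 + t / n)) atTop (𝓝 0) := by
    have h : Tendsto (fun n : ℕ => 1 + t / n) atTop (𝓝 1) := by
      simpa using (tendsto_const_div_atTop_nhds_zero_nat t).const_add 1
    simpa only [Function.comp_def, log_one] using (continuousAt_log one_ne_zero).tendsto.comp h
  have h := ((tendsto_mul_log_one_add_div_atTop t).comp tendsto_natCast_atTop_atTop).add
    (hlog.const_mul (t - 1 / 2))
  rw [mul_zero, add_zero] at h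
  refine h.congr' ?_
  filter_upwards [eventually_ne_atTop 0,
    tendsto_natCast_atTop_atTop.eventually_gt_atTop (-t)] with n hn hnt
  have hn' : (n : ℝ) ≠ 0 := by positivity
  rw [Function.comp_apply, ← log_div (by linarith) hn', add_div, div_self hn']
  ring

lemma tendsto_binetFun_natCast_add {t : ℝ} (ht₀ : 0 ≤ t) (ht₁ : t ≤ 1) :
    Tendsto (fun n : ℕ => binetFun (n + t)) atTop (𝓝 0) := by
  rcases ht₀.eq_or_lt with rfl | ht₀
  · simpa using tendsto_binetFun_natCast
  have h := (tendsto_binetFun_natCast.add (tendsto_log_Gamma_natCast_add_sub ht₀ ht₁)).sub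
    (tendsto_mul_log_natCast_add_sub_log t) |>.add_const t
  rw [add_zero, sub_add_cancel] at h
  refine h.congr fun n => ?_
  simp only [binetFun]
  ring

lemma tendsto_binetFun_add_natCast {x : ℝ} (hx : 0 ≤ x) :
    Tendsto (fun n : ℕ => binetFun (x + n)) atTop (𝓝 0) := by
  have ht₀ : 0 ≤ x - ⌊x⌋₊ := sub_nonneg.2 (Nat.floor_le hx)
  have ht₁ : x - ⌊x⌋₊ ≤ 1 := by linarith [Nat.lt_floor_add_one x]
  refine ((tendsto_binetFun_natCast_add ht₀ ht₁).comp (tendsto_add_atTop_nat ⌊x⌋₊)).congr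
    fun n => ?_
  rw [Function.comp_apply, Nat.cast_add]
  congr 1
  ring

lemma antitone_binetFun_add_natCast {x : ℝ} (hx : 0 < x) :
    Antitone fun n : ℕ => binetFun (x + n) :=
  antitone_nat_of_succ_le fun n => by
    have := binetFun_add_one_le (x := x + n) (by positivity)
    rwa [Nat.cast_succ, ← add_assoc]

lemma monotone_binetFun_add_natCast_sub {x : ℝ} (hx : 0 < x) :
    Monotone fun n : ℕ => binetFun (x + n) - 1 / (12 * (x + n)) :=
  monotone_nat_of_le_succ fun n => by
    have := binetFun_sub_binetFun_add_one_le (x := x + n) (by positivity)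
    rw [Nat.cast_succ, ← add_assoc]
    linarith

lemma binetFun_nonneg {x : ℝ} (hx : 0 < x) : 0 ≤ binetFun x := by
  simpa using (antitone_binetFun_add_natCast hx).le_of_tendsto
    (tendsto_binetFun_add_natCast hx.le) 0

lemma binetFun_le {x : ℝ} (hx : 0 < x) : binetFun x ≤ 1 / (12 * x) := by
  have hlim : Tendsto (fun n : ℕ => binetFun (x + n) - 1 / (12 * (x + n))) atTop (𝓝 0) := by
    have h : Tendsto (fun n : ℕ => 1 / (12 * (x + n))) atTop (𝓝 0) :=
      tendsto_const_nhds.div_atTop <| (tendsto_atTop_add_const_left _ x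
        tendsto_natCast_atTop_atTop).const_mul_atTop (by norm_num)
    simpa using (tendsto_binetFun_add_natCast hx.le).sub h
  simpa only [Nat.cast_zero, add_zero, sub_nonpos] using
    (monotone_binetFun_add_natCast_sub hx).ge_of_tendsto hlim 0

lemma Gamma_eq_mul_exp_binetFun {x : ℝ} (hx : 0 < x) :
    Gamma x = √(2 * π) * x ^ (x - 1 / 2) * exp (-x) * exp (binetFun x) := by
  rw [binetFun, exp_sub, exp_add, exp_sub, exp_log (Gamma_pos_of_pos hx), exp_log (by positivity),
    rpow_def_of_pos hx, mul_comm (log x), exp_neg]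
  field_simp

theorem stmt5 (x : ℝ) (hx : 1 ≤ x) :
    Real.sqrt (2 * Real.pi) * x ^ (x - 1/2) * Real.exp (-x) ≤ Real.Gamma x ∧
    Real.Gamma x ≤ Real.sqrt (2 * Real.pi) * x ^ (x - 1/2) * Real.exp (-x) * Real.exp (1/12) := by
  have hx₀ : 0 < x := by linarith
  rw [Gamma_eq_mul_exp_binetFun hx₀]
  constructor
  · exact le_mul_of_one_le_right (by positivity) (one_le_exp (binetFun_nonneg hx₀))
  · gcongr
    calc binetFun x ≤ 1 / (12 * x) := binetFun_le hx₀
      _ ≤ 1 / 12 := by rw [div_le_div_iff₀ (by positivity) (by norm_num)]; linarith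
end

section
/- Let n and d be positive integers with 1 ≤ d ≤ n-1. Then C(n-1, d-1) ≥ (1/(3n)) · (n/d)^d · (n/(n-d))^(n-d), where quotients are real. -/
theorem stmt7 (n d : ℕ) (hd1 : 1 ≤ d) (hdn : d ≤ n - 1) :
    ((Nat.choose (n - 1) (d - 1) : ℕ) : ℝ) ≥
      (1 / (3 * n)) * (((n : ℝ) / d) ^ d * ((n : ℝ) / ((n : ℝ) - d)) ^ (n - d)) := by
  have hn : d < n := by omega
  set s : ℕ → ℕ := fun k => Nat.choose n k * d ^ k * (n - d) ^ (n - k) with hs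
  -- step relation
  have hstep : ∀ k, s (k + 1) * ((k + 1) * (n - d)) = s k * ((n - k) * d) := by
    intro k
    rcases lt_or_ge k n with h | h
    · have h1 : n - (k + 1) + 1 = n - k := by omega
      simp only [hs]
      have hc := Nat.choose_succ_right_eq n k
      calc Nat.choose n (k+1) * d ^ (k+1) * (n-d) ^ (n-(k+1)) * ((k+1) * (n-d))
          = (Nat.choose n (k+1) * (k+1)) * (d ^ (k+1) * ((n-d) ^ (n-(k+1)) * (n-d))) := by ring
        _ = (Nat.choose n k * (n-k)) * (d ^ (k+1) * (n-d) ^ (n-k)) := by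
            rw [hc, ← pow_succ, h1]
        _ = Nat.choose n k * d ^ k * (n-d) ^ (n-k) * ((n-k) * d) := by
            rw [pow_succ]; ring
    · have h1 : Nat.choose n (k + 1) = 0 := Nat.choose_eq_zero_of_lt (by omega)
      have h2 : n - k = 0 := by omega
      simp [hs, h1, h2]
  have hndpos : 0 < n - d := by omega
  -- increasing up to d
  have hup : ∀ k, k + 1 ≤ d → s k ≤ s (k + 1) := by
    intro k hk
    have hA : 0 < (k + 1) * (n - d) := Nat.mul_pos (Nat.succ_pos k) hndpos
    have h1 : (k + 1) * (n - d) ≤ (n - k) * d := by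
      calc (k + 1) * (n - d) ≤ d * (n - k) :=
            Nat.mul_le_mul (by omega) (by omega)
        _ = (n - k) * d := Nat.mul_comm _ _
    have : s k * ((k + 1) * (n - d)) ≤ s (k + 1) * ((k + 1) * (n - d)) := by
      rw [hstep k]
      exact Nat.mul_le_mul_left _ h1
    exact Nat.le_of_mul_le_mul_right this hA
  have hmono : ∀ k, k ≤ d → s k ≤ s d := by
    have key : ∀ m, m ≤ d → s (d - m) ≤ s d := by
      intro m
      induction m with
      | zero => simp
      | succ m ih =>
        intro hm
        have h1 : d - (m + 1) + 1 = d - m := by omega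
        have h2 : s (d - (m + 1)) ≤ s (d - m) := by
          have := hup (d - (m + 1)) (by omega)
          rwa [h1] at this
        exact h2.trans (ih (by omega))
    intro k hk
    have := key (d - k) (by omega)
    rwa [Nat.sub_sub_self hk] at this
  -- geometric decay above d
  have hdown : ∀ k, d ≤ k → (d + 1) * s (k + 1) ≤ d * s k := by
    intro k hk
    rcases lt_or_ge k n with h | h
    · have hA : 0 < (k + 1) * (n - d) := Nat.mul_pos (Nat.succ_pos k) hndpos
      have h1 : (d + 1) * (n - k) ≤ (k + 1) * (n - d) := by
        zify [le_of_lt h, le_of_lt hn]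
        nlinarith [hk, hn]
      have : (d + 1) * s (k + 1) * ((k + 1) * (n - d)) ≤ d * s k * ((k + 1) * (n - d)) := by
        calc (d + 1) * s (k + 1) * ((k + 1) * (n - d))
            = (d + 1) * (s (k + 1) * ((k + 1) * (n - d))) := by ring
          _ = (d + 1) * (s k * ((n - k) * d)) := by rw [hstep k]
          _ = d * s k * ((d + 1) * (n - k)) := by ring
          _ ≤ d * s k * ((k + 1) * (n - d)) := Nat.mul_le_mul_left _ h1
      exact Nat.le_of_mul_le_mul_right this hA
    · have h1 : Nat.choose n (k + 1) = 0 := Nat.choose_eq_zero_of_lt (by omega)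
      simp [hs, h1]
  -- tail sum bound
  set S : ℕ := ∑ j ∈ Finset.range (n - d + 1), s (d + j) with hS
  have htail : S ≤ (d + 1) * s d := by
    have hsplit : S = (∑ j ∈ Finset.range (n - d), s (d + (j + 1))) + s (d + 0) :=
      Finset.sum_range_succ' (fun j => s (d + j)) (n - d)
    have h1 : (d + 1) * ∑ j ∈ Finset.range (n - d), s (d + (j + 1))
        ≤ d * ∑ j ∈ Finset.range (n - d), s (d + j) := by
      rw [Finset.mul_sum, Finset.mul_sum]
      apply Finset.sum_le_sum
      intro j _
      have := hdown (d + j) (Nat.le_add_right d j)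
      simpa [Nat.add_assoc] using this
    have h2 : (∑ j ∈ Finset.range (n - d), s (d + j)) ≤ S := by
      rw [hS]
      exact Finset.sum_le_sum_of_subset (Finset.range_subset_range.2 (by omega))
    have h3 : (d + 1) * S ≤ (d + 1) * s d + d * S := by
      calc (d + 1) * S = (d + 1) * (∑ j ∈ Finset.range (n - d), s (d + (j + 1)))
            + (d + 1) * s (d + 0) := by rw [hsplit, Nat.mul_add]
        _ ≤ d * (∑ j ∈ Finset.range (n - d), s (d + j)) + (d + 1) * s d := by
            simpa using Nat.add_le_add h1 (le_refl ((d + 1) * s d))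
        _ ≤ d * S + (d + 1) * s d := by
            exact Nat.add_le_add (Nat.mul_le_mul_left d h2) (le_refl _)
        _ = (d + 1) * s d + d * S := by ring
    have h4 : d * S + S ≤ d * S + (d + 1) * s d := by
      calc d * S + S = (d + 1) * S := by ring
        _ ≤ (d + 1) * s d + d * S := h3
        _ = d * S + (d + 1) * s d := by ring
    exact Nat.le_of_add_le_add_left h4
  -- binomial theorem
  have hbino : n ^ n = ∑ k ∈ Finset.range (n + 1), s k := by
    have := add_pow d (n - d) n
    have hnd : d + (n - d) = n := by omega
    rw [hnd] at this
    rw [this]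
    apply Finset.sum_congr rfl
    intro k _
    simp only [hs, Nat.cast_id]
    ring
  -- main nat inequality
  have hkey : n ^ n ≤ 3 * d * s d := by
    have hsplit : ∑ k ∈ Finset.range (n + 1), s k
        = (∑ k ∈ Finset.range d, s k) + S := by
      have hd : n + 1 = d + (n - d + 1) := by omega
      rw [hd, Finset.sum_range_add]
    have hleft : (∑ k ∈ Finset.range d, s k) ≤ d * s d := by
      calc (∑ k ∈ Finset.range d, s k) ≤ ∑ k ∈ Finset.range d, s d :=
            Finset.sum_le_sum (fun k hk => hmono k (le_of_lt (Finset.mem_range.1 hk)))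
        _ = d * s d := by rw [Finset.sum_const, Finset.card_range, smul_eq_mul]
    calc n ^ n = (∑ k ∈ Finset.range d, s k) + S := by rw [hbino, hsplit]
      _ ≤ d * s d + (d + 1) * s d := Nat.add_le_add hleft htail
      _ = (2 * d + 1) * s d := by ring
      _ ≤ 3 * d * s d := Nat.mul_le_mul_right _ (by omega)
  -- relate choose n d to choose (n-1) (d-1)
  have hch : d * Nat.choose n d = n * Nat.choose (n - 1) (d - 1) := by
    have := Nat.add_one_mul_choose_eq (n - 1) (d - 1)
    have h1 : n - 1 + 1 = n := by omega
    have h2 : d - 1 + 1 = d := by omega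
    simp only [Nat.succ_eq_add_one, h1, h2] at this
    rw [this]
    ring
  have hkey2 : n ^ n ≤ 3 * (n * Nat.choose (n - 1) (d - 1)) * (d ^ d * (n - d) ^ (n - d)) := by
    calc n ^ n ≤ 3 * d * s d := hkey
      _ = 3 * (d * Nat.choose n d) * (d ^ d * (n - d) ^ (n - d)) := by
          simp only [hs]; ring
      _ = 3 * (n * Nat.choose (n - 1) (d - 1)) * (d ^ d * (n - d) ^ (n - d)) := by rw [hch]
  -- pass to the reals
  have hnR : (0:ℝ) < n := by exact_mod_cast Nat.cast_pos.2 (by omega : 0 < n)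
  have hdR : (0:ℝ) < d := by exact_mod_cast Nat.cast_pos.2 (by omega : 0 < d)
  have hcast : ((n:ℝ) - d) = ((n - d : ℕ) : ℝ) := by
    rw [Nat.cast_sub (le_of_lt hn)]
  have hndR : (0:ℝ) < ((n - d : ℕ) : ℝ) := by exact_mod_cast Nat.cast_pos.2 hndpos
  rw [ge_iff_le, hcast, div_pow, div_pow]
  rw [div_mul_div_comm, ← pow_add]
  have hpowadd : d + (n - d) = n := by omega
  rw [hpowadd]
  have hden : (0:ℝ) < (d:ℝ) ^ d * ((n - d : ℕ) : ℝ) ^ (n - d) := by positivity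
  rw [one_div, inv_mul_eq_div, div_div]
  rw [div_le_iff₀ (by positivity)]
  have hcastkey : (n:ℝ) ^ n ≤ 3 * ((n:ℝ) * (Nat.choose (n - 1) (d - 1) : ℝ))
      * ((d:ℝ) ^ d * ((n - d : ℕ) : ℝ) ^ (n - d)) := by
    exact_mod_cast hkey2
  refine hcastkey.trans (le_of_eq ?_)
  ring
end

section
/- Let n and d be positive integers with 1 ≤ d ≤ n-1. Then C(n-1, d-1)^(1/d) ≥ 3^(-1/d) · n^(1 - 1/d) / d. -/
lemma aux_div_pow_le_choose (k : ℕ) : ∀ n : ℕ, k ≤ n → ((n : ℝ) / k) ^ k ≤ (n.choose k : ℝ) := by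
  induction k with
  | zero => intro n _; simp
  | succ k ih =>
    intro n hn
    obtain ⟨m, rfl⟩ : ∃ m, n = m + 1 := ⟨n - 1, by omega⟩
    have hkm : k ≤ m := by omega
    have hid : ((m : ℝ) + 1) * (m.choose k : ℝ)
        = (((m + 1).choose (k + 1) : ℕ) : ℝ) * ((k : ℝ) + 1) := by
      exact_mod_cast congrArg (Nat.cast : ℕ → ℝ) (Nat.add_one_mul_choose_eq m k)
    have hk1 : (0 : ℝ) < (k : ℝ) + 1 := by positivity
    have hchoose : (((m + 1).choose (k + 1) : ℕ) : ℝ)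
        = ((m : ℝ) + 1) * (m.choose k : ℝ) / ((k : ℝ) + 1) := by
      field_simp
      linarith [hid]
    have h1 : (((m : ℝ) + 1) / ((k : ℝ) + 1)) ^ k ≤ ((m : ℝ) / k) ^ k := by
      rcases Nat.eq_zero_or_pos k with hk0 | hk0
      · subst hk0; simp
      · have hkpos : (0 : ℝ) < (k : ℝ) := by exact_mod_cast hk0
        apply pow_le_pow_left₀ (by positivity)
        rw [div_le_div_iff₀ hk1 hkpos]
        have : (k : ℝ) ≤ m := by exact_mod_cast hkm
        nlinarith
    have h2 : ((m : ℝ) / k) ^ k ≤ (m.choose k : ℝ) := ih m hkm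
    have hx : (0 : ℝ) ≤ ((m : ℝ) + 1) / ((k : ℝ) + 1) := by positivity
    have hcast : (((m + 1 : ℕ) : ℝ) / ((k + 1 : ℕ) : ℝ)) ^ (k + 1)
        = (((m : ℝ) + 1) / ((k : ℝ) + 1)) ^ (k + 1) := by push_cast; ring
    rw [hcast, hchoose]
    calc (((m : ℝ) + 1) / ((k : ℝ) + 1)) ^ (k + 1)
        = (((m : ℝ) + 1) / ((k : ℝ) + 1)) ^ k * (((m : ℝ) + 1) / ((k : ℝ) + 1)) :=
          pow_succ _ _
      _ ≤ ((m : ℝ) / k) ^ k * (((m : ℝ) + 1) / ((k : ℝ) + 1)) :=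
          mul_le_mul_of_nonneg_right h1 hx
      _ ≤ (m.choose k : ℝ) * (((m : ℝ) + 1) / ((k : ℝ) + 1)) :=
          mul_le_mul_of_nonneg_right h2 hx
      _ = ((m : ℝ) + 1) * (m.choose k : ℝ) / ((k : ℝ) + 1) := by ring

theorem stmt9 (n d : ℕ) (hd1 : 1 ≤ d) (hdn : d ≤ n - 1) :
    ((Nat.choose (n - 1) (d - 1) : ℕ) : ℝ) ^ ((1 : ℝ) / d) ≥
      (3 : ℝ) ^ (-(1 : ℝ) / d) * (n : ℝ) ^ (1 - (1 : ℝ) / d) / d := by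
  have hn2 : 2 ≤ n := by omega
  have hd0 : (0 : ℝ) < (d : ℝ) := by exact_mod_cast hd1
  have hn0 : (0 : ℝ) < (n : ℝ) := by positivity
  set R : ℝ := (3 : ℝ) ^ (-(1 : ℝ) / d) * (n : ℝ) ^ (1 - (1 : ℝ) / d) / d with hRdef
  have hR0 : (0 : ℝ) ≤ R := by
    rw [hRdef]
    positivity
  have hcastn : ((n - 1 : ℕ) : ℝ) = (n : ℝ) - 1 := by
    push_cast [Nat.cast_sub (by omega : 1 ≤ n)]; ring
  have hcastd : ((d - 1 : ℕ) : ℝ) = (d : ℝ) - 1 := by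
    push_cast [Nat.cast_sub hd1]; ring
  have haux := aux_div_pow_le_choose (d - 1) (n - 1) (by omega)
  have hstep1 : ((n : ℝ) / (d : ℝ)) ^ (d - 1)
      ≤ (((n - 1 : ℕ) : ℝ) / ((d - 1 : ℕ) : ℝ)) ^ (d - 1) := by
    rcases eq_or_lt_of_le hd1 with h1 | h2
    · rw [← h1]; simp
    · apply pow_le_pow_left₀ (by positivity)
      have hd1R : (1:ℝ) < (d:ℝ) := by exact_mod_cast h2
      rw [hcastn, hcastd, div_le_div_iff₀ hd0 (by linarith)]
      have hdle : (d : ℝ) ≤ (n : ℝ) - 1 := by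
        rw [← hcastn]; exact_mod_cast hdn
      nlinarith
  have hstep2 : (n : ℝ) ^ (d - 1) / (3 * (d : ℝ) ^ d) ≤ ((n : ℝ) / (d : ℝ)) ^ (d - 1) := by
    rw [div_pow]
    apply div_le_div_of_nonneg_left (by positivity) (by positivity)
    have h1 : (d : ℝ) ^ (d - 1) ≤ (d : ℝ) ^ d :=
      pow_le_pow_right₀ (by exact_mod_cast hd1) (by omega)
    nlinarith [pow_pos hd0 d, pow_pos hd0 (d - 1)]
  have hC : (n : ℝ) ^ (d - 1) / (3 * (d : ℝ) ^ d) ≤ (((n - 1).choose (d - 1) : ℕ) : ℝ) :=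
    hstep2.trans (hstep1.trans haux)
  have hRd : R ^ d = (n : ℝ) ^ (d - 1) / (3 * (d : ℝ) ^ d) := by
    rw [hRdef, div_pow, mul_pow, ← Real.rpow_natCast ((3 : ℝ) ^ (-(1 : ℝ) / d)) d,
      ← Real.rpow_natCast ((n : ℝ) ^ (1 - (1 : ℝ) / d)) d,
      ← Real.rpow_mul (by norm_num : (0:ℝ) ≤ 3), ← Real.rpow_mul hn0.le]
    have h1 : (-(1 : ℝ) / d) * (d : ℝ) = -1 := by field_simp
    have h2 : (1 - (1 : ℝ) / d) * (d : ℝ) = ((d - 1 : ℕ) : ℝ) := by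
      rw [hcastd]; field_simp
    rw [h1, h2, Real.rpow_natCast, Real.rpow_neg_one]
    ring
  have hfinal : R = (R ^ d) ^ ((1 : ℝ) / d) := by
    rw [← Real.rpow_natCast R d, ← Real.rpow_mul hR0, mul_one_div, div_self (ne_of_gt hd0),
      Real.rpow_one]
  calc (((n - 1).choose (d - 1) : ℕ) : ℝ) ^ ((1 : ℝ) / d)
      ≥ (R ^ d) ^ ((1 : ℝ) / d) :=
        Real.rpow_le_rpow (pow_nonneg hR0 d) (hRd ▸ hC) (by positivity)
    _ = R := hfinal.symm
end
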